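/- arXiv:1409.2843 — 2 statements merged into one kernel-verified Lean document; each statement's English description precedes it below -/
import Mathlib

section
/- Let p be a prime and J a multiset over (ZMod p)^3 with |J| = 4p - 3. Let N^k(J) denote the number of sub-multisets of J of cardinality k whose sum is 0. Then 1 - N^p(J) + N^{2p}(J) - N^{3p}(J) ≡ 0 (mod p). -/
/-!
Chevalley–Warning. Index the elements of `J` by `j`. The polynomials `∑ⱼ aⱼ(i) xⱼ^(p-1)`
(`i = 0, 1, 2`) together with `∑ⱼ xⱼ^(p-1)` have total degrees summing to `4(p-1) < |J|`, so
`p` divides the number of their common zeros. Since `x^(p-1) = [x ≠ 0]`, a point is a common zero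
exactly when its support `S` is a zero-sum set with `p ∣ |S|`, and each `S` is the support of
`(p-1)^|S| ≡ (-1)^|S|` points. As `|S| < 4p`, only `|S| ∈ {0, p, 2p, 3p}` contribute.
-/

/-- Number of zero-sum sub-multisets of `J` of cardinality `k`. -/
def N {p : ℕ} (k : ℕ) (J : Multiset (Fin 3 → ZMod p)) : ℕ :=
  (J.powerset.filter (fun T => Multiset.card T = k ∧ T.sum = 0)).card

open Finset MvPolynomial

theorem Multiset.powerset_map {α β : Type*} (f : α → β) (s : Multiset α) :
    (s.map f).powerset = s.powerset.map (map f) := by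
  induction s using Multiset.induction with
  | empty => simp
  | cons a s ih => simp [powerset_cons, ih, map_map]

theorem Finset.map_val_val_powerset {α : Type*} (s : Finset α) :
    s.powerset.val.map Finset.val = s.val.powerset := by
  simp [powerset, Multiset.map_pmap, Multiset.pmap_eq_map]

theorem Multiset.card_filter_powerset_map_univ {ι α : Type*} [Fintype ι] (a : ι → α)
    (P : Multiset α → Prop) [DecidablePred P] :
    card (((univ : Finset ι).val.map a).powerset.filter P) =
      #{S : Finset ι | P (S.val.map a)} := by
  rw [powerset_map, ← map_val_val_powerset, powerset_univ, map_map, filter_map, card_map]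
  rfl

theorem N_eq_card_filter_finset {p : ℕ} (k : ℕ) (J : Multiset (Fin 3 → ZMod p)) :
    N k J = #{S : Finset J | #S = k ∧ ∑ x ∈ S, (x : Fin 3 → ZMod p) = 0} := by
  conv_lhs => rw [N, ← Multiset.map_univ_coe J, Multiset.card_filter_powerset_map_univ]
  simp only [Multiset.card_map]
  rfl

theorem N_zero {p : ℕ} (J : Multiset (Fin 3 → ZMod p)) : N 0 J = 1 := by
  rw [N_eq_card_filter_finset, card_eq_one]
  exact ⟨∅, by ext S; constructor <;> simp +contextual [card_eq_zero]⟩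

section Support

variable {ι M : Type*} [Fintype ι] [DecidableEq ι] [Fintype M] [DecidableEq M] [Zero M]

theorem card_filter_support_eq (S : Finset ι) :
    #{x : ι → M | ({j | x j ≠ 0} : Finset ι) = S} = (Fintype.card M - 1) ^ #S := by
  have hfib : ∀ x : ι → M,
      ({j | x j ≠ 0} : Finset ι) = S ↔ ∀ j, (x j ≠ 0 ↔ j ∈ S) := by
    intro x
    simp [Finset.ext_iff, Iff.comm]
  have hcard : ∀ j, Fintype.card {y : M // y ≠ 0 ↔ j ∈ S} =
      if j ∈ S then Fintype.card M - 1 else 1 := by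
    intro j
    split_ifs with hj <;> simp [hj, Fintype.card_subtype_compl]
  rw [← Fintype.card_subtype, Fintype.card_congr ((Equiv.subtypeEquivRight hfib).trans
      (Equiv.subtypePiEquivPi (p := fun j (y : M) => y ≠ 0 ↔ j ∈ S))),
    Fintype.card_pi]
  simp_rw [hcard]
  rw [prod_ite_mem, univ_inter, prod_const]

theorem sum_comp_support_eq_sum_pow_card_smul {R : Type*} [AddCommMonoid R] (f : Finset ι → R) :
    ∑ x : ι → M, f ({j | x j ≠ 0} : Finset ι) =
      ∑ S, (Fintype.card M - 1) ^ #S • f S := by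
  rw [← sum_fiberwise univ (fun x : ι → M => ({j | x j ≠ 0} : Finset ι))]
  refine sum_congr rfl fun S _ => ?_
  rw [sum_congr rfl fun x hx => congrArg f (mem_filter.1 hx).2, sum_const, card_filter_support_eq]

end Support

theorem totalDegree_sum_C_mul_X_pow_le {R ι : Type*} [CommSemiring R] [Fintype ι] (c : ι → R)
    (m : ℕ) :
    (∑ j, C (c j) * X j ^ m : MvPolynomial ι R).totalDegree ≤ m := by
  refine (totalDegree_finsetSum _ _).trans (Finset.sup_le fun j _ => ?_)
  rw [C_mul_X_pow_eq_monomial]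
  exact (totalDegree_monomial_le _ _).trans (by simp)

section ZeroSum

variable {K ι : Type*} [Field K] [Fintype K] [DecidableEq K] [Fintype ι]

theorem eval_sum_C_mul_X_pow_card_sub_one (c : ι → K) (x : ι → K) :
    eval x (∑ j, C (c j) * X j ^ (Fintype.card K - 1)) = ∑ j with x j ≠ 0, c j := by
  rw [map_sum, sum_filter]
  refine sum_congr rfl fun j _ => ?_
  rw [map_mul, map_pow, eval_C, eval_X]
  split_ifs with hx
  · rw [FiniteField.pow_card_sub_one_eq_one _ hx, mul_one]
  · rw [not_not.1 hx, zero_pow (Nat.sub_ne_zero_of_lt Fintype.one_lt_card), mul_zero]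

theorem sum_neg_one_pow_card_filter_sum_eq_zero {κ : Type*} [Fintype κ] [DecidableEq ι]
    (a : ι → κ → K)
    (h : Fintype.card κ * (Fintype.card K - 1) < Fintype.card ι) :
    ∑ S : Finset ι with ∑ j ∈ S, a j = 0, (-1 : K) ^ #S = 0 := by
  let f : κ → MvPolynomial ι K := fun k => ∑ j, C (a j k) * X j ^ (Fintype.card K - 1)
  have hdeg : ∑ k, (f k).totalDegree < Fintype.card ι :=
    (sum_le_sum fun k _ => totalDegree_sum_C_mul_X_pow_le _ _).trans_lt (by simpa using h)
  have hsol : ∀ x : ι → K, (∀ k, eval x (f k) = 0) ↔ ∑ j with x j ≠ 0, a j = 0 := by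
    intro x
    simp only [f, eval_sum_C_mul_X_pow_card_sub_one, funext_iff, Finset.sum_apply, Pi.zero_apply]
  have hcard : (Fintype.card {x : ι → K // ∀ k, eval x (f k) = 0} : K) = 0 :=
    (CharP.cast_eq_zero_iff K (ringChar K) _).2
      (char_dvd_card_solutions_of_fintype_sum_lt (ringChar K) hdeg)
  have hq : ((Fintype.card K - 1 : ℕ) : K) = -1 := by
    rw [Nat.cast_sub Fintype.card_pos, FiniteField.cast_card_eq_zero, Nat.cast_one, zero_sub]
  rw [Fintype.card_subtype, filter_congr fun x _ => hsol x, card_eq_sum_ones, Nat.cast_sum,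
    sum_filter,
    sum_comp_support_eq_sum_pow_card_smul
      fun S => if ∑ j ∈ S, a j = 0 then ((1 : ℕ) : K) else 0]
    at hcard
  rw [← hcard, sum_filter]
  refine sum_congr rfl fun S _ => ?_
  split_ifs <;> simp [hq]

end ZeroSum

theorem sum_neg_one_pow_card_filter_card_eq_zero_and_sum_eq_zero {K ι κ : Type*} [Field K]
    [Fintype K] [DecidableEq K] [Fintype ι] [DecidableEq ι] [Fintype κ] (a : ι → κ → K)
    (h : (Fintype.card κ + 1) * (Fintype.card K - 1) < Fintype.card ι) :
    ∑ S : Finset ι with (#S : K) = 0 ∧ ∑ j ∈ S, a j = 0, (-1 : K) ^ #S = 0 := by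
  -- The extra coordinate `1` sums to `#S` over `S`.
  have key := sum_neg_one_pow_card_filter_sum_eq_zero (fun j (o : Option κ) => o.elim 1 (a j))
    (by rwa [Fintype.card_option])
  convert key using 2
  ext S
  simp only [funext_iff, Option.forall, Finset.sum_apply, Option.elim, sum_const, nsmul_eq_mul,
    mul_one, Pi.zero_apply]

theorem sum_filter_dvd_card_eq_sum_range {ι R : Type*} [Fintype ι] [AddCommMonoid R]
    (p m : ℕ) (hp : 0 < p) (hι : Fintype.card ι < m * p) (P : Finset ι → Prop)
    [DecidablePred P] (f : ℕ → R) :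
    ∑ S : Finset ι with p ∣ #S ∧ P S, f #S =
      ∑ c ∈ range m, #{S : Finset ι | #S = p * c ∧ P S} • f (p * c) := by
  have hmaps : ∀ S ∈ ({S | p ∣ #S ∧ P S} : Finset (Finset ι)), #S / p ∈ range m := by
    intro S _
    rw [mem_range, Nat.div_lt_iff_lt_mul hp]
    exact (card_le_univ S).trans_lt hι
  rw [← sum_fiberwise_of_maps_to hmaps]
  refine sum_congr rfl fun c _ => ?_
  rw [filter_filter]
  have hfib : ∀ S : Finset ι, (p ∣ #S ∧ P S) ∧ #S / p = c ↔ #S = p * c ∧ P S := by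
    intro S
    constructor
    · rintro ⟨⟨⟨d, hd⟩, hP⟩, rfl⟩
      exact ⟨by rw [hd, Nat.mul_div_cancel_left _ hp], hP⟩
    · rintro ⟨hS, hP⟩
      exact ⟨⟨⟨c, hS⟩, hP⟩, by rw [hS, Nat.mul_div_cancel_left _ hp]⟩
  rw [filter_congr fun S _ => hfib S, sum_congr rfl fun S hS => congrArg f (mem_filter.1 hS).2.1,
    sum_const]

theorem stmt_7 (p : ℕ) (hp : p.Prime) (J : Multiset (Fin 3 → ZMod p))
    (hJ : Multiset.card J = 4 * p - 3) :
    (1 - (N p J : ℤ) + N (2 * p) J - N (3 * p) J) ≡ 0 [ZMOD p] := by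
  classical
  have := Fact.mk hp
  have hcard : Fintype.card J = 4 * p - 3 := by rw [Multiset.card_coe, hJ]
  have hp2 := hp.two_le
  have key := sum_neg_one_pow_card_filter_card_eq_zero_and_sum_eq_zero (K := ZMod p)
    (fun x : J => (x : Fin 3 → ZMod p)) (by rw [hcard, Fintype.card_fin, ZMod.card]; omega)
  simp_rw [ZMod.natCast_eq_zero_iff] at key
  rw [sum_filter_dvd_card_eq_sum_range p 4 hp.pos (by omega)] at key
  simp only [sum_range_succ, range_zero, sum_empty, mul_zero, mul_one, ← N_eq_card_filter_finset,
    N_zero, pow_mul, ZMod.pow_card, nsmul_eq_mul] at key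
  apply (ZMod.intCast_eq_intCast_iff _ _ p).1
  push_cast
  rw [mul_comm p 2, mul_comm p 3] at key
  linear_combination key
end

section
/- Let p be a prime with p > 7 and p ∉ {13, 17, 19, 47, 61}, and let J be a multiset over (ZMod p)^3 with |J| = 9p - 3 and no zero-sum sub-multiset of cardinality p. Then J has a zero-sum sub-multiset of cardinality 6p. -/
/-!
For vectors `a i ∈ (ZMod p)^κ`, Chevalley–Warning applied to `∑ i, x i ^ (p - 1)` and to
`∑ i, a i c • x i ^ (p - 1)` (one for each coordinate `c`) shows that the common zeros number
`∑ (p - 1) ^ #t ≡ ∑ (-1) ^ #t ≡ 0 (mod p)`, summed over the zero-sum index sets `t` with `p ∣ #t`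
(the supports of the common zeros). For more than `4 (p - 1)` vectors of `(ZMod p)^3` this says
that the numbers `N k` of zero-sum subsets of size `k p` satisfy `∑ k, (-1) ^ k N k ≡ 0`.

Let `S` have `5 p - 3` elements, no zero-sum subset of size `p`, and suppose it has none of size
`2 p`. It has none of size `4 p` either: for such a `T` the relation reads `1 + 1 ≡ 0`, as the
`3 p`-subsets of `T` with zero sum are the complements of its `p`-subsets with zero sum. So the
relation gives `N 3 ≡ 1` both for `S` and for each of its `(4 p - 3)`-subsets `K`, and counting the
pairs `T ⊆ K` yields `C(5p-3, 4p-3) ≡ C(2p-3, p-3)`, that is `4 ≡ 1` by Lucas. Hence every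
`5 p - 3` of the `9 p - 3` vectors contain a zero-sum `2 p`-subset, and three disjoint ones make
up the zero-sum `6 p`-subset.
-/

open Finset MvPolynomial

variable {ι : Type*}

theorem card_filter_support_eq_s17 {R : Type*} [Zero R] [Fintype R] [DecidableEq R]
    [Fintype ι] [DecidableEq ι] (t : Finset ι) :
    #{x : ι → R | ({i | x i ≠ 0} : Finset ι) = t} = (Fintype.card R - 1) ^ #t := by
  have : ({x : ι → R | ({i | x i ≠ 0} : Finset ι) = t} : Finset (ι → R)) =
      Fintype.piFinset fun i => if i ∈ t then {0}ᶜ else {0} := by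
    ext x
    simp only [mem_filter, mem_univ, true_and, Fintype.mem_piFinset, Finset.ext_iff]
    refine forall_congr' fun i => ?_
    split_ifs with hi <;> simp [hi]
  rw [this, Fintype.card_piFinset]
  simp only [apply_ite card, card_compl, card_singleton, prod_ite_mem, univ_inter, prod_const]

theorem card_filter_support_mem {R : Type*} [Zero R] [Fintype R] [DecidableEq R]
    [Fintype ι] [DecidableEq ι] (D : Finset (Finset ι)) :
    #{x : ι → R | ({i | x i ≠ 0} : Finset ι) ∈ D} = ∑ t ∈ D, (Fintype.card R - 1) ^ #t := by
  rw [card_eq_sum_card_fiberwise (s := {x : ι → R | ({i | x i ≠ 0} : Finset ι) ∈ D}) (t := D)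
    (f := fun x => ({i | x i ≠ 0} : Finset ι)) fun x hx => by simpa using hx]
  refine sum_congr rfl fun t ht => ?_
  rw [← card_filter_support_eq_s17, filter_filter]
  congr 1
  ext x
  simp only [mem_filter, mem_univ, true_and]
  exact ⟨And.right, fun hx => ⟨hx ▸ ht, hx⟩⟩

variable {p : ℕ} [Fact p.Prime]

theorem eval_sum_smul_X_pow_card_sub_one [Fintype ι] [DecidableEq ι] (w : ι → ZMod p)
    (x : ι → ZMod p) :
    eval x (∑ i, w i • X i ^ (p - 1)) = ∑ i with x i ≠ 0, w i := by
  simp [ZMod.pow_card_sub_one, sum_filter]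

theorem sum_neg_one_pow_card_zeroSum_eq_zero {κ : Type*} [Fintype κ] [Fintype ι]
    [DecidableEq ι] (a : ι → κ → ZMod p)
    (hcard : (Fintype.card κ + 1) * (p - 1) < Fintype.card ι) :
    ∑ t : Finset ι with p ∣ #t ∧ ∑ i ∈ t, a i = 0, (-1 : ZMod p) ^ #t = 0 := by
  set D : Finset (Finset ι) := {t | p ∣ #t ∧ ∑ i ∈ t, a i = 0}
  let w : Option κ → ι → ZMod p := fun j i => j.elim 1 (a i)
  let f : Option κ → MvPolynomial ι (ZMod p) := fun j => ∑ i, w j i • X i ^ (p - 1)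
  have hdeg : ∑ j, (f j).totalDegree < Fintype.card ι := by
    calc ∑ j, (f j).totalDegree ≤ ∑ _j : Option κ, (p - 1) := by
          gcongr with j
          refine totalDegree_finsetSum_le fun i _ => ?_
          exact (totalDegree_smul_le ..).trans (totalDegree_X_pow ..).le
      _ < Fintype.card ι := by simpa [mul_comm] using hcard
  let supp (x : ι → ZMod p) : Finset ι := {i | x i ≠ 0}
  have hsol (x : ι → ZMod p) : (∀ j, eval x (f j) = 0) ↔ supp x ∈ D := by
    simp only [f, eval_sum_smul_X_pow_card_sub_one, Option.forall, D, mem_filter, mem_univ,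
      true_and, w, Option.elim, sum_const, nsmul_eq_mul, mul_one, CharP.cast_eq_zero_iff _ p,
      _root_.funext_iff, Finset.sum_apply, Pi.zero_apply, supp]
  have hcount : Fintype.card {x : ι → ZMod p // ∀ j, eval x (f j) = 0} =
      ∑ t ∈ D, (p - 1) ^ #t := by
    rw [Fintype.card_subtype, filter_congr fun x _ => hsol x, card_filter_support_mem, ZMod.card]
  have hdvd := char_dvd_card_solutions_of_fintype_sum_lt p hdeg
  rw [hcount, ← CharP.cast_eq_zero_iff (ZMod p)] at hdvd
  simpa [Nat.cast_sub (Fact.out : p.Prime).one_le] using hdvd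

def zeroSumSubsets {G : Type*} [AddCommMonoid G] [DecidableEq G] (a : ι → G) (s : Finset ι)
    (m : ℕ) : Finset (Finset ι) :=
  {t ∈ s.powersetCard m | ∑ i ∈ t, a i = 0}

section zeroSumSubsets

variable {G : Type*} [AddCommMonoid G] [DecidableEq G] {a : ι → G} {s t : Finset ι} {m : ℕ}

theorem mem_zeroSumSubsets :
    t ∈ zeroSumSubsets a s m ↔ t ⊆ s ∧ #t = m ∧ ∑ i ∈ t, a i = 0 := by
  rw [zeroSumSubsets, mem_filter, mem_powersetCard, and_assoc]

theorem zeroSumSubsets_map {κ : Type*} (f : κ ↪ ι) (s : Finset κ) (m : ℕ) :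
    zeroSumSubsets a (s.map f) m =
      (zeroSumSubsets (a ∘ f) s m).map (mapEmbedding f).toEmbedding := by
  simp [zeroSumSubsets, powersetCard_map, filter_map]

theorem zeroSumSubsets_eq_empty_of_subset {s' : Finset ι} (h : s' ⊆ s)
    (hs : zeroSumSubsets a s m = ∅) : zeroSumSubsets a s' m = ∅ :=
  eq_empty_of_forall_notMem fun u hu => by
    obtain ⟨hus', hu⟩ := mem_zeroSumSubsets.1 hu
    simpa [hs] using mem_zeroSumSubsets.2 ⟨hus'.trans h, hu⟩

theorem zeroSumSubsets_zero : zeroSumSubsets a s 0 = {∅} := by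
  simp [zeroSumSubsets]

theorem zeroSumSubsets_card_self (hs : ∑ i ∈ s, a i = 0) : zeroSumSubsets a s #s = {s} := by
  simp [zeroSumSubsets, hs]

theorem sdiff_mem_zeroSumSubsets {u : Finset ι} [DecidableEq ι] (hs : ∑ i ∈ s, a i = 0)
    (hu : u ∈ zeroSumSubsets a s m) : s \ u ∈ zeroSumSubsets a s (#s - m) := by
  obtain ⟨hus, rfl, hu0⟩ := mem_zeroSumSubsets.1 hu
  refine mem_zeroSumSubsets.2 ⟨sdiff_subset, card_sdiff_of_subset hus, ?_⟩
  simpa [hu0, hs] using sum_sdiff hus (f := a)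

theorem sum_card_zeroSumSubsets_powersetCard [DecidableEq ι] {n : ℕ} (hmn : m ≤ n) :
    ∑ K ∈ s.powersetCard n, #(zeroSumSubsets a K m) =
      #(zeroSumSubsets a s m) * (#s - m).choose (n - m) := by
  have hK : ∀ K ∈ s.powersetCard n,
      zeroSumSubsets a K m = (zeroSumSubsets a s m).bipartiteBelow (· ⊆ ·) K := by
    intro K hK
    ext u
    simp only [bipartiteBelow, mem_filter, mem_zeroSumSubsets]
    exact ⟨fun ⟨huK, hu⟩ => ⟨⟨huK.trans (mem_powersetCard.1 hK).1, hu⟩, huK⟩,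
      fun ⟨⟨_, hu⟩, huK⟩ => ⟨huK, hu⟩⟩
  rw [sum_congr rfl fun K h => congrArg card (hK K h),
    ← sum_card_bipartiteAbove_eq_sum_card_bipartiteBelow, ← smul_eq_mul, ← sum_const]
  refine sum_congr rfl fun u hu => ?_
  obtain ⟨hus, rfl, -⟩ := mem_zeroSumSubsets.1 hu
  exact card_filter_powersetCard_subset u s n hus hmn

end zeroSumSubsets

theorem exists_zeroSum_subset_card_mul {G : Type*} [AddCommMonoid G] [DecidableEq ι]
    {a : ι → G} {s : Finset ι} {N m : ℕ}
    (hext : ∀ u ⊆ s, N ≤ #u → ∃ t ⊆ u, #t = m ∧ ∑ i ∈ t, a i = 0) (k : ℕ)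
    (hk : N + k * m ≤ #s + m) : ∃ t ⊆ s, #t = k * m ∧ ∑ i ∈ t, a i = 0 := by
  induction k generalizing s with
  | zero => exact ⟨∅, empty_subset s, by simp⟩
  | succ k ih =>
    obtain ⟨t, hts, htc, ht⟩ := hext s subset_rfl (by nlinarith)
    have hrest : #(s \ t) = #s - m := by rw [card_sdiff_of_subset hts, htc]
    have hms : m ≤ #s := htc ▸ card_le_card hts
    obtain ⟨t', ht's, ht'c, ht'⟩ :=
      ih (fun u hu => hext u (hu.trans sdiff_subset))
        (by rw [hrest, Nat.sub_add_cancel hms]; nlinarith)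
    have hdisj : Disjoint t t' := disjoint_of_subset_right ht's disjoint_sdiff
    refine ⟨t ∪ t', union_subset hts (ht's.trans sdiff_subset), ?_, ?_⟩
    · rw [card_union_of_disjoint hdisj, htc, ht'c]; ring
    · rw [sum_union hdisj, ht, ht', add_zero]

theorem sum_neg_one_pow_mul_card_zeroSumSubsets_univ {κ : Type*} [Fintype κ] [Fintype ι]
    [DecidableEq ι] (a : ι → κ → ZMod p)
    (hcard : (Fintype.card κ + 1) * (p - 1) < Fintype.card ι) :
    ∑ k ∈ range (Fintype.card ι / p + 1),
      (-1 : ZMod p) ^ k * #(zeroSumSubsets a univ (k * p)) = 0 := by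
  have hp := (Fact.out : p.Prime).pos
  rw [← sum_neg_one_pow_card_zeroSum_eq_zero a hcard,
    ← sum_fiberwise_of_maps_to (g := fun t => #t / p) (t := range (Fintype.card ι / p + 1))
      fun t _ => mem_range_succ_iff.2 (Nat.div_le_div_right (card_le_univ t))]
  refine sum_congr rfl fun k _ => ?_
  have hfiber : ({t : Finset ι | p ∣ #t ∧ ∑ i ∈ t, a i = 0} : Finset _).filter (#· / p = k) =
      zeroSumSubsets a univ (k * p) := by
    ext t
    simp only [mem_filter, mem_univ, true_and, mem_zeroSumSubsets, subset_univ]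
    constructor
    · rintro ⟨⟨⟨c, hc⟩, hsum⟩, rfl⟩
      simp [hc, hp, hsum, mul_comm]
    · rintro ⟨hc, hsum⟩
      simp [hc, hp, hsum]
  rw [hfiber, sum_congr rfl fun t ht => by rw [(mem_zeroSumSubsets.1 ht).2.1, pow_mul,
    ZMod.pow_card], sum_const, nsmul_eq_mul, mul_comm]

theorem sum_neg_one_pow_mul_card_zeroSumSubsets {κ : Type*} [Fintype κ] [DecidableEq ι]
    (a : ι → κ → ZMod p) {s : Finset ι} (hs : (Fintype.card κ + 1) * (p - 1) < #s) :
    ∑ k ∈ range (#s / p + 1), (-1 : ZMod p) ^ k * #(zeroSumSubsets a s (k * p)) = 0 := by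
  have hmap : (univ : Finset s).map (Function.Embedding.subtype _) = s := by
    rw [univ_eq_attach, attach_map_val]
  have hcard (m : ℕ) :
      #(zeroSumSubsets a s m) = #(zeroSumSubsets (a ∘ (↑) : s → κ → ZMod p) univ m) := by
    conv_lhs => rw [← hmap, zeroSumSubsets_map, card_map]
    rfl
  simp_rw [hcard]
  rw [← Fintype.card_coe s] at hs ⊢
  exact sum_neg_one_pow_mul_card_zeroSumSubsets_univ _ hs

theorem choose_mul_add_modEq_choose {m n r : ℕ} (hr : r < p) :
    (p * m + r).choose (p * n + r) ≡ m.choose n [MOD p] := by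
  have hp := (Fact.out : p.Prime).pos
  simpa [Nat.mul_add_mod, Nat.mod_eq_of_lt hr, Nat.mul_add_div hp, Nat.div_eq_of_lt hr]
    using Choose.choose_modEq_choose_mod_mul_choose_div_nat (p := p) (n := p * m + r)
      (k := p * n + r)

section FinThree

variable [DecidableEq ι] {a : ι → Fin 3 → ZMod p} {s : Finset ι}

theorem zeroSumSubsets_four_mul_eq_empty (hp : p ≠ 2) (h1 : zeroSumSubsets a s p = ∅)
    (h2 : zeroSumSubsets a s (2 * p) = ∅) : zeroSumSubsets a s (4 * p) = ∅ := by
  refine eq_empty_of_forall_notMem fun t ht => hp ?_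
  obtain ⟨hts, htc, ht⟩ := mem_zeroSumSubsets.1 ht
  have hp0 := (Fact.out : p.Prime).pos
  have hrel := sum_neg_one_pow_mul_card_zeroSumSubsets a (s := t) (by simp; omega)
  have e1 : zeroSumSubsets a t p = ∅ := zeroSumSubsets_eq_empty_of_subset hts h1
  have e2 : zeroSumSubsets a t (2 * p) = ∅ :=
    zeroSumSubsets_eq_empty_of_subset hts h2
  have e3 : zeroSumSubsets a t (3 * p) = ∅ := by
    refine eq_empty_of_forall_notMem fun u hu => ?_
    have := sdiff_mem_zeroSumSubsets ht hu
    rw [htc, show 4 * p - 3 * p = p by omega, e1] at this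
    exact notMem_empty _ this
  have e4 : zeroSumSubsets a t (4 * p) = {t} := htc ▸ zeroSumSubsets_card_self ht
  simp [htc, hp0, sum_range_succ, zeroSumSubsets_zero, e1, e2, e3, e4] at hrel
  have h20 : ((2 : ℕ) : ZMod p) = 0 := by norm_num at hrel ⊢; linear_combination hrel
  rw [ZMod.natCast_eq_zero_iff] at h20
  exact (Nat.prime_dvd_prime_iff_eq Fact.out Nat.prime_two).1 h20

theorem cast_card_zeroSumSubsets_three_mul_eq_one_of_card_four_mul_sub_three (hp : 3 ≤ p)
    (hs : #s = 4 * p - 3) (h1 : zeroSumSubsets a s p = ∅)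
    (h2 : zeroSumSubsets a s (2 * p) = ∅) :
    (#(zeroSumSubsets a s (3 * p)) : ZMod p) = 1 := by
  have hrel := sum_neg_one_pow_mul_card_zeroSumSubsets a (s := s) (by simp; omega)
  rw [hs, Nat.div_eq_of_lt_le (k := 3) (by omega) (by omega)] at hrel
  simp [sum_range_succ, zeroSumSubsets_zero, h1, h2] at hrel
  linear_combination -hrel

theorem cast_card_zeroSumSubsets_three_mul_eq_one_of_card_five_mul_sub_three (hp : 3 ≤ p)
    (hs : #s = 5 * p - 3) (h1 : zeroSumSubsets a s p = ∅)
    (h2 : zeroSumSubsets a s (2 * p) = ∅) :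
    (#(zeroSumSubsets a s (3 * p)) : ZMod p) = 1 := by
  have hrel := sum_neg_one_pow_mul_card_zeroSumSubsets a (s := s) (by simp; omega)
  rw [hs, Nat.div_eq_of_lt_le (k := 4) (by omega) (by omega)] at hrel
  simp [sum_range_succ, zeroSumSubsets_zero, h1, h2,
    zeroSumSubsets_four_mul_eq_empty (by omega) h1 h2] at hrel
  linear_combination -hrel

theorem zeroSumSubsets_two_mul_nonempty (hp : 3 < p) (hs : #s = 5 * p - 3)
    (h1 : zeroSumSubsets a s p = ∅) : (zeroSumSubsets a s (2 * p)).Nonempty := by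
  rw [nonempty_iff_ne_empty]
  intro h2
  have hK : ∀ K ∈ s.powersetCard (4 * p - 3), (#(zeroSumSubsets a K (3 * p)) : ZMod p) = 1 := by
    intro K hK
    obtain ⟨hKs, hK⟩ := mem_powersetCard.1 hK
    exact cast_card_zeroSumSubsets_three_mul_eq_one_of_card_four_mul_sub_three hp.le hK
      (zeroSumSubsets_eq_empty_of_subset hKs h1) (zeroSumSubsets_eq_empty_of_subset hKs h2)
  have hcount := congrArg (Nat.cast : ℕ → ZMod p)
    (sum_card_zeroSumSubsets_powersetCard (a := a) (s := s) (m := 3 * p) (n := 4 * p - 3)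
      (by omega))
  push_cast at hcount
  rw [sum_congr rfl hK, cast_card_zeroSumSubsets_three_mul_eq_one_of_card_five_mul_sub_three
    hp.le hs h1 h2, sum_const, card_powersetCard, hs, nsmul_one, one_mul] at hcount
  have hbig : (5 * p - 3).choose (4 * p - 3) ≡ 4 [MOD p] := by
    simpa [show 5 * p - 3 = p * 4 + (p - 3) by omega, show 4 * p - 3 = p * 3 + (p - 3) by omega]
      using choose_mul_add_modEq_choose (p := p) (m := 4) (n := 3) (r := p - 3) (by omega)
  have hsmall : (5 * p - 3 - 3 * p).choose (4 * p - 3 - 3 * p) ≡ 1 [MOD p] := by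
    simpa [show 5 * p - 3 - 3 * p = p * 1 + (p - 3) by omega,
      show 4 * p - 3 - 3 * p = p * 0 + (p - 3) by omega]
      using choose_mul_add_modEq_choose (p := p) (m := 1) (n := 0) (r := p - 3) (by omega)
  rw [(ZMod.natCast_eq_natCast_iff _ _ _).2 hbig, (ZMod.natCast_eq_natCast_iff _ _ _).2 hsmall]
    at hcount
  have h30 : ((3 : ℕ) : ZMod p) = 0 := by norm_num at hcount ⊢; linear_combination hcount
  rw [ZMod.natCast_eq_zero_iff] at h30
  exact hp.ne' ((Nat.prime_dvd_prime_iff_eq Fact.out Nat.prime_three).1 h30)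

theorem exists_zeroSum_two_mul (hp : 3 < p) (hs : 5 * p - 3 ≤ #s)
    (h1 : zeroSumSubsets a s p = ∅) : ∃ t ⊆ s, #t = 2 * p ∧ ∑ i ∈ t, a i = 0 := by
  obtain ⟨s', hs's, hs'⟩ := exists_subset_card_eq hs
  obtain ⟨t, ht⟩ :=
    zeroSumSubsets_two_mul_nonempty hp hs' (zeroSumSubsets_eq_empty_of_subset hs's h1)
  obtain ⟨hts', ht⟩ := mem_zeroSumSubsets.1 ht
  exact ⟨t, hts'.trans hs's, ht⟩

end FinThree

theorem stmt_17_general (p : ℕ) (hp : p.Prime) (hp7 : 7 < p)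
    (J : Multiset (Fin 3 → ZMod p)) (hJ : Multiset.card J = 9 * p - 3)
    (h : ¬∃ T ≤ J, Multiset.card T = p ∧ T.sum = 0) :
    ∃ T ≤ J, Multiset.card T = 6 * p ∧ T.sum = 0 := by
  have : Fact p.Prime := ⟨hp⟩
  set s := J.toEnumFinset
  have toMultiset {t : Finset ((Fin 3 → ZMod p) × ℕ)} (hts : t ⊆ s) :
      t.val.map Prod.fst ≤ J := Multiset.map_fst_le_of_subset_toEnumFinset hts
  have hfree : zeroSumSubsets Prod.fst s p = ∅ := by
    refine eq_empty_of_forall_notMem fun t ht => h ?_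
    obtain ⟨hts, htc, ht⟩ := mem_zeroSumSubsets.1 ht
    exact ⟨_, toMultiset hts, by simpa using htc, ht⟩
  obtain ⟨t, hts, htc, ht⟩ := exists_zeroSum_subset_card_mul (N := 5 * p - 3)
    (fun u hus hu => exists_zeroSum_two_mul (by omega) hu
      (zeroSumSubsets_eq_empty_of_subset hus hfree)) 3
    (by rw [Multiset.card_toEnumFinset, hJ]; omega)
  exact ⟨_, toMultiset hts, by simpa [← mul_assoc] using htc, ht⟩

theorem stmt_17 (p : ℕ) (hp : p.Prime) (hp7 : 7 < p)
    (hp' : p ≠ 13 ∧ p ≠ 17 ∧ p ≠ 19 ∧ p ≠ 47 ∧ p ≠ 61)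
    (J : Multiset (Fin 3 → ZMod p)) (hJ : Multiset.card J = 9 * p - 3)
    (h : ¬∃ T ≤ J, Multiset.card T = p ∧ T.sum = 0) :
    ∃ T ≤ J, Multiset.card T = 6 * p ∧ T.sum = 0 :=
  stmt_17_general p hp hp7 J hJ h
end
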